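/- Let A₁, A₂ be real symmetric n×n matrices with spectral norms ‖A₁‖₂ ≤ 1 and ‖A₂‖₂ ≤ 1, let ε > 0, and for p ∈ [0,1] write A(p) = p·A₁ + (1−p)·A₂. Let x₁, x₂ ∈ ℝⁿ be unit vectors and let 0 ≤ p₁ ≤ p₂ ≤ 1 satisfy p₂ − p₁ ≤ ε/8, x₁ᵀ A(p₁) x₁ ≥ 3ε/4, x₂ᵀ A(p₂) x₂ ≥ 3ε/4, x₁ᵀ A₁ x₁ ≤ x₁ᵀ A₂ x₁, and x₂ᵀ A₂ x₂ ≤ x₂ᵀ A₁ x₂. Then there exists q ∈ [0,1] such that the matrix X = q·x₁x₁ᵀ + (1−q)·x₂x₂ᵀ is positive semidefinite, has tr(X) ≤ 1, and satisfies A₁ • X ≥ ε/2 and A₂ • X ≥ ε/2. -/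

import Mathlib

open Matrix BigOperators

noncomputable def frob {m : Type*} [Fintype m] (A X : Matrix m m ℝ) : ℝ :=
  (Aᵀ * X).trace

noncomputable def specNorm {m : Type*} [Fintype m] [DecidableEq m]
    (A : Matrix m m ℝ) : ℝ :=
  ‖Matrix.toEuclideanCLM (𝕜 := ℝ) A‖

noncomputable def euclNorm {m : Type*} [Fintype m] (x : m → ℝ) : ℝ :=
  Real.sqrt (∑ i, x i ^ 2)

/-!
With `aᵢ = xᵢᵀ A₁ xᵢ` and `bᵢ = xᵢᵀ A₂ xᵢ`, the map `p ↦ x₁ᵀ A(p) x₁` has slope `a₁ - b₁ ∈ [-2, 0]`,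
so moving from `p₁` to `p₂` loses at most `2 (p₂ - p₁) ≤ ε/4`: both `x₁` and `x₂` satisfy
`xᵢᵀ A(p₂) xᵢ ≥ ε/2`. The two vectors favour opposite matrices (`a₁ ≤ b₁`, `b₂ ≤ a₂`), so either
`q = 1` works or some `q ∈ [0, 1]` gives `A₁ • X = ε/2` exactly; then
`p₂ (A₁ • X) + (1 - p₂) (A₂ • X) ≥ ε/2` with `p₂ < 1` forces `A₂ • X ≥ ε/2`.
-/

section
variable {m : Type*} [Fintype m]

lemma euclNorm_eq_norm_toLp (x : m → ℝ) : euclNorm x = ‖WithLp.toLp 2 x‖ := by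
  simp [euclNorm, EuclideanSpace.norm_eq]

lemma euclNorm_sq (x : m → ℝ) : euclNorm x ^ 2 = x ⬝ᵥ x := by
  rw [euclNorm, Real.sq_sqrt (by positivity)]
  simp [dotProduct, sq]

lemma frob_add (A X Y : Matrix m m ℝ) : frob A (X + Y) = frob A X + frob A Y := by
  simp [frob, Matrix.mul_add, trace_add]

lemma frob_smul (A X : Matrix m m ℝ) (c : ℝ) : frob A (c • X) = c * frob A X := by
  simp [frob, trace_smul]

lemma frob_vecMulVec (A : Matrix m m ℝ) (x y : m → ℝ) :
    frob A (vecMulVec x y) = x ⬝ᵥ A *ᵥ y := by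
  rw [frob, mul_vecMulVec, trace_vecMulVec, mulVec_transpose, dotProduct_mulVec]

variable [DecidableEq m]

lemma abs_dotProduct_mulVec_le (A : Matrix m m ℝ) (x y : m → ℝ) :
    |x ⬝ᵥ A *ᵥ y| ≤ specNorm A * euclNorm x * euclNorm y := by
  set u := WithLp.toLp 2 x
  set v := WithLp.toLp 2 y
  calc |x ⬝ᵥ A *ᵥ y| = |inner ℝ u (toEuclideanCLM (𝕜 := ℝ) A v)| := by
        rw [inner_toEuclideanCLM]
    _ ≤ ‖u‖ * ‖toEuclideanCLM (𝕜 := ℝ) A v‖ := abs_real_inner_le_norm _ _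
    _ ≤ ‖u‖ * (specNorm A * ‖v‖) :=
        mul_le_mul_of_nonneg_left ((toEuclideanCLM (𝕜 := ℝ) A).le_opNorm v) (norm_nonneg u)
    _ = specNorm A * euclNorm x * euclNorm y := by
        rw [euclNorm_eq_norm_toLp, euclNorm_eq_norm_toLp]; ring
end

lemma exists_mem_Icc_le_of_crossing {a₁ a₂ b₁ b₂ c p : ℝ} (hp : p ≤ 1)
    (hab₁ : a₁ ≤ b₁) (hba₂ : b₂ ≤ a₂)
    (h₁ : c ≤ p * a₁ + (1 - p) * b₁) (h₂ : c ≤ p * a₂ + (1 - p) * b₂) :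
    ∃ q ∈ Set.Icc (0 : ℝ) 1, c ≤ q * a₁ + (1 - q) * a₂ ∧ c ≤ q * b₁ + (1 - q) * b₂ := by
  by_cases ha₁ : c ≤ a₁
  · exact ⟨1, ⟨zero_le_one, le_rfl⟩, by linarith, by linarith⟩
  replace ha₁ : a₁ < c := not_le.mp ha₁
  have hp_lt : p < 1 := lt_of_le_of_ne hp fun h => by subst h; linarith
  have ha₂ : c ≤ a₂ := by linarith [mul_nonneg (sub_nonneg.2 hp) (sub_nonneg.2 hba₂)]
  have hgap : 0 < a₂ - a₁ := by linarith
  set q := (a₂ - c) / (a₂ - a₁)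
  have hq₀ : 0 ≤ q := div_nonneg (by linarith) hgap.le
  have hq₁ : q ≤ 1 := (div_le_one hgap).2 (by linarith)
  have hu : q * a₁ + (1 - q) * a₂ = c := by
    simp only [q]; field_simp; ring
  refine ⟨q, ⟨hq₀, hq₁⟩, hu.ge, ?_⟩
  have hmix : c ≤ p * c + (1 - p) * (q * b₁ + (1 - q) * b₂) := calc
    c = q * c + (1 - q) * c := by ring
    _ ≤ q * (p * a₁ + (1 - p) * b₁) + (1 - q) * (p * a₂ + (1 - p) * b₂) := by gcongr
    _ = p * (q * a₁ + (1 - q) * a₂) + (1 - p) * (q * b₁ + (1 - q) * b₂) := by ring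
    _ = p * c + (1 - p) * (q * b₁ + (1 - q) * b₂) := by rw [hu]
  exact le_of_mul_le_mul_left (by linarith) (sub_pos.2 hp_lt)

theorem binary_search_yields_rank_two_solution_general {n : ℕ}
    (A₁ A₂ : Matrix (Fin n) (Fin n) ℝ)
    (hA₁ : specNorm A₁ ≤ 1) (hA₂ : specNorm A₂ ≤ 1)
    (ε : ℝ) (hε : 0 < ε)
    (x₁ x₂ : Fin n → ℝ) (hx₁ : euclNorm x₁ = 1) (hx₂ : euclNorm x₂ = 1)
    (p₁ p₂ : ℝ) (hp₁₂ : p₁ ≤ p₂) (hp₂ : p₂ ≤ 1)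
    (hgap : p₂ - p₁ ≤ ε / 8)
    (h₁ : 3 * ε / 4 ≤ x₁ ⬝ᵥ (p₁ • A₁ + (1 - p₁) • A₂).mulVec x₁)
    (h₂ : 3 * ε / 4 ≤ x₂ ⬝ᵥ (p₂ • A₁ + (1 - p₂) • A₂).mulVec x₂)
    (hm₁ : x₁ ⬝ᵥ A₁.mulVec x₁ ≤ x₁ ⬝ᵥ A₂.mulVec x₁)
    (hm₂ : x₂ ⬝ᵥ A₂.mulVec x₂ ≤ x₂ ⬝ᵥ A₁.mulVec x₂) :
    ∃ q ∈ Set.Icc (0 : ℝ) 1,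
      (q • vecMulVec x₁ x₁ + (1 - q) • vecMulVec x₂ x₂).PosSemidef ∧
      (q • vecMulVec x₁ x₁ + (1 - q) • vecMulVec x₂ x₂).trace ≤ 1 ∧
      ε / 2 ≤ frob A₁ (q • vecMulVec x₁ x₁ + (1 - q) • vecMulVec x₂ x₂) ∧
      ε / 2 ≤ frob A₂ (q • vecMulVec x₁ x₁ + (1 - q) • vecMulVec x₂ x₂) := by
  have hbound (A : Matrix (Fin n) (Fin n) ℝ) (hA : specNorm A ≤ 1) :
      |x₁ ⬝ᵥ A *ᵥ x₁| ≤ 1 := by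
    simpa [hx₁] using (abs_dotProduct_mulVec_le A x₁ x₁).trans (by simpa [hx₁] using hA)
  have ha₁ := abs_le.mp (hbound A₁ hA₁)
  have hb₁ := abs_le.mp (hbound A₂ hA₂)
  simp only [add_mulVec, smul_mulVec, dotProduct_add, dotProduct_smul, smul_eq_mul] at h₁ h₂
  have hdrift : (p₂ - p₁) * (x₁ ⬝ᵥ A₂ *ᵥ x₁ - x₁ ⬝ᵥ A₁ *ᵥ x₁) ≤ (p₂ - p₁) * 2 :=
    mul_le_mul_of_nonneg_left (by linarith) (sub_nonneg.2 hp₁₂)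
  have hf₁ : ε / 2 ≤ p₂ * (x₁ ⬝ᵥ A₁ *ᵥ x₁) + (1 - p₂) * (x₁ ⬝ᵥ A₂ *ᵥ x₁) := by linarith
  obtain ⟨q, hq, hqA₁, hqA₂⟩ := exists_mem_Icc_le_of_crossing hp₂ hm₁ hm₂ hf₁ (by linarith)
  have hpsd (x : Fin n → ℝ) : (vecMulVec x x).PosSemidef := by
    simpa using posSemidef_vecMulVec_self_star x
  refine ⟨q, hq, ((hpsd x₁).smul hq.1).add ((hpsd x₂).smul (sub_nonneg.2 hq.2)), ?_, ?_, ?_⟩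
  · simp [trace_vecMulVec, ← euclNorm_sq, hx₁, hx₂]
  all_goals rwa [frob_add, frob_smul, frob_smul, frob_vecMulVec, frob_vecMulVec]

/-- the feasible-branch guarantee of the linear-time SDP solver:
the binary-search witnesses combine into a rank-two approximate SDP solution. -/
theorem binary_search_yields_rank_two_solution {n : ℕ}
    (A₁ A₂ : Matrix (Fin n) (Fin n) ℝ) (hA₁s : A₁.IsSymm) (hA₂s : A₂.IsSymm)
    (hA₁ : specNorm A₁ ≤ 1) (hA₂ : specNorm A₂ ≤ 1)
    (ε : ℝ) (hε : 0 < ε)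
    (x₁ x₂ : Fin n → ℝ) (hx₁ : euclNorm x₁ = 1) (hx₂ : euclNorm x₂ = 1)
    (p₁ p₂ : ℝ) (hp₁ : 0 ≤ p₁) (hp₁₂ : p₁ ≤ p₂) (hp₂ : p₂ ≤ 1)
    (hgap : p₂ - p₁ ≤ ε / 8)
    (h₁ : 3 * ε / 4 ≤ x₁ ⬝ᵥ (p₁ • A₁ + (1 - p₁) • A₂).mulVec x₁)
    (h₂ : 3 * ε / 4 ≤ x₂ ⬝ᵥ (p₂ • A₁ + (1 - p₂) • A₂).mulVec x₂)
    (hm₁ : x₁ ⬝ᵥ A₁.mulVec x₁ ≤ x₁ ⬝ᵥ A₂.mulVec x₁)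
    (hm₂ : x₂ ⬝ᵥ A₂.mulVec x₂ ≤ x₂ ⬝ᵥ A₁.mulVec x₂) :
    ∃ q ∈ Set.Icc (0 : ℝ) 1,
      (q • vecMulVec x₁ x₁ + (1 - q) • vecMulVec x₂ x₂).PosSemidef ∧
      (q • vecMulVec x₁ x₁ + (1 - q) • vecMulVec x₂ x₂).trace ≤ 1 ∧
      ε / 2 ≤ frob A₁ (q • vecMulVec x₁ x₁ + (1 - q) • vecMulVec x₂ x₂) ∧
      ε / 2 ≤ frob A₂ (q • vecMulVec x₁ x₁ + (1 - q) • vecMulVec x₂ x₂) :=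
  binary_search_yields_rank_two_solution_general A₁ A₂ hA₁ hA₂ ε hε x₁ x₂ hx₁ hx₂ p₁ p₂ hp₁₂ hp₂
    hgap h₁ h₂ hm₁ hm₂
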